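/- Let m ≥ 1 be an integer, δ̂ ∈ (0,1], and C₀ ≥ 0. Define 𝒫(z) = max over (a₁,…,a_m) ∈ [δ̂/2, 2δ̂⁻¹]^m of Σ_{k=1}^m a_k z_k for z ∈ ℝ^m. Let F : ℝ^m → ℝ be Lipschitz continuous such that at every point z where F is differentiable the gradient ∇F(z) lies in [δ̂, δ̂⁻¹]^m, and suppose |F(0)| ≤ C₀. Then for every z ∈ ℝ^m, F(z) ≤ 𝒫(z) − (δ̂/2) Σ_{k=1}^m |z_k| + C₀. -/

import Mathlib

/-!
Along each coordinate direction `F` grows at rate between `δ̂` and `δ̂⁻¹`: Rademacher's theorem and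
Fubini make `F` differentiable at a.e. point of a.e. line, the fundamental theorem of calculus for
Lipschitz functions gives the increment bound on those lines, and continuity extends it to all
lines. Walking from `0` to `z` one coordinate at a time gives
`F z ≤ F 0 + Σ max (δ̂⁻¹ z_k) (δ̂ z_k)`, and `max (δ̂⁻¹ y) (δ̂ y) + (δ̂/2)|y| = a y` with
`a ∈ [δ̂/2, 2δ̂⁻¹]`, so the right-hand side is one of the sums whose supremum is `𝒫(z)`.
-/

open scoped BigOperators NNReal

noncomputable section

/-- `𝒫(z) = max over (a₁,…,a_m) ∈ [δ̂/2, 2δ̂⁻¹]^m of Σ_k a_k z_k`. -/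
def Pcal (m : ℕ) (δhat : ℝ) (z : Fin m → ℝ) : ℝ :=
  sSup {s : ℝ | ∃ a : Fin m → ℝ,
    (∀ k, δhat / 2 ≤ a k ∧ a k ≤ 2 * δhat⁻¹) ∧ s = ∑ k, a k * z k}

end

open MeasureTheory Set

theorem AbsolutelyContinuousOnInterval.sub_mem_Icc_of_ae_deriv_mem_Icc {g : ℝ → ℝ} {a b c C : ℝ}
    (hg : AbsolutelyContinuousOnInterval g a b) (hab : a ≤ b)
    (h : ∀ᵐ s ∂volume.restrict (Icc a b), deriv g s ∈ Icc c C) :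
    g b - g a ∈ Icc (c * (b - a)) (C * (b - a)) := by
  have hderiv_int := hg.intervalIntegrable_deriv
  rw [← hg.integral_deriv_eq_sub]
  constructor
  · calc c * (b - a) = ∫ _ in a..b, c := by simp [mul_comm]
      _ ≤ ∫ s in a..b, deriv g s :=
        intervalIntegral.integral_mono_ae_restrict hab intervalIntegrable_const hderiv_int
          (h.mono fun _ hs => hs.1)
  · calc ∫ s in a..b, deriv g s ≤ ∫ _ in a..b, C :=
        intervalIntegral.integral_mono_ae_restrict hab hderiv_int intervalIntegrable_const
          (h.mono fun _ hs => hs.2)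
      _ = C * (b - a) := by simp [mul_comm]

section LineRestriction

variable {E : Type*} [NormedAddCommGroup E] [NormedSpace ℝ E] {K : ℝ≥0} {F : E → ℝ}

theorem LipschitzWith.lipschitzWith_comp_line (hF : LipschitzWith K F) (w v : E) :
    LipschitzWith (K * ‖v‖₊) fun s : ℝ => F (w + s • v) := by
  have hline : LipschitzWith ‖v‖₊ fun s : ℝ => w + s • v := by
    simpa using (LipschitzWith.const w).add
      (ContinuousLinearMap.smulRight (1 : ℝ →L[ℝ] ℝ) v).lipschitz
  exact hF.comp hline

variable [FiniteDimensional ℝ E] [MeasurableSpace E] [BorelSpace E]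

-- Rademacher's theorem and Fubini: a.e. line in direction `v` meets the points of
-- differentiability of `F` in a.e. point.
theorem LipschitzWith.dense_setOf_ae_differentiableAt_line (hF : LipschitzWith K F) (v : E) :
    Dense {w : E | ∀ᵐ s : ℝ, DifferentiableAt ℝ F (w + s • v)} := by
  let μ : Measure E := Measure.addHaar
  have htranslate : ∀ s : ℝ, ∀ᵐ w ∂μ, DifferentiableAt ℝ F (w + s • v) := fun s =>
    (measurePreserving_add_right μ (s • v)).quasiMeasurePreserving.ae
      (hF.ae_differentiableAt (μ := μ))
  have hmeas : MeasurableSet {p : ℝ × E | DifferentiableAt ℝ F (p.2 + p.1 • v)} :=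
    (measurableSet_of_differentiableAt ℝ F).preimage
      (continuous_snd.add (continuous_fst.smul continuous_const)).measurable
  exact μ.dense_of_ae ((Measure.ae_ae_comm hmeas).1 (.of_forall htranslate))

theorem LipschitzWith.sub_mem_Icc_of_hasFDerivAt {v : E} {c C : ℝ} (hF : LipschitzWith K F)
    (hderiv : ∀ z (f' : E →L[ℝ] ℝ), HasFDerivAt F f' z → f' v ∈ Icc c C) (x : E) {t : ℝ}
    (ht : 0 ≤ t) :
    F (x + t • v) - F x ∈ Icc (c * t) (C * t) := by
  have hclosed : IsClosed {x | F (x + t • v) - F x ∈ Icc (c * t) (C * t)} :=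
    isClosed_Icc.preimage ((hF.continuous.comp (continuous_add_const _)).sub hF.continuous)
  suffices hgood : {w : E | ∀ᵐ s : ℝ, DifferentiableAt ℝ F (w + s • v)} ⊆
      {x | F (x + t • v) - F x ∈ Icc (c * t) (C * t)} from
    hclosed.closure_subset_iff.2 hgood
      ((hF.dense_setOf_ae_differentiableAt_line v).closure_eq ▸ mem_univ x)
  intro w hw
  have hg := ((hF.lipschitzWith_comp_line w v).lipschitzOnWith
    (s := uIcc 0 t)).absolutelyContinuousOnInterval
  have hderiv_line : ∀ᵐ s : ℝ, deriv (fun s : ℝ => F (w + s • v)) s ∈ Icc c C := by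
    filter_upwards [hw] with s hs
    have hline : HasDerivAt (fun s : ℝ => w + s • v) v s := by
      simpa using ((hasDerivAt_id s).smul_const v).const_add w
    have hcomp : HasDerivAt (fun s : ℝ => F (w + s • v)) (fderiv ℝ F (w + s • v) v) s :=
      hs.hasFDerivAt.comp_hasDerivAt s hline
    exact hcomp.deriv ▸ hderiv _ _ hs.hasFDerivAt
  simpa using hg.sub_mem_Icc_of_ae_deriv_mem_Icc ht (ae_restrict_of_ae hderiv_line)

end LineRestriction

theorem sub_le_max_of_forall_nonneg_sub_mem_Icc {E : Type*} [AddCommGroup E] [Module ℝ E]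
    {F : E → ℝ} {v : E} {c C : ℝ}
    (h : ∀ x (t : ℝ), 0 ≤ t → F (x + t • v) - F x ∈ Icc (c * t) (C * t)) (x : E) (t : ℝ) :
    F (x + t • v) - F x ≤ max (C * t) (c * t) := by
  rcases le_total 0 t with ht | ht
  · exact le_max_of_le_left (h x t ht).2
  · have hback := (h (x + t • v) (-t) (neg_nonneg.2 ht)).1
    rw [add_assoc, ← add_smul, add_neg_cancel, zero_smul, add_zero] at hback
    exact le_max_of_le_right (by linarith)

theorem sub_le_sum_of_forall_add_sub_le {E ι : Type*} [AddCommMonoid E] {F : E → ℝ}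
    {v : ι → E} {b : ι → ℝ} (h : ∀ x k, F (x + v k) - F x ≤ b k) (s : Finset ι) (x : E) :
    F (x + ∑ k ∈ s, v k) - F x ≤ ∑ k ∈ s, b k := by
  classical
  induction s using Finset.induction_on with
  | empty => simp
  | insert j s hj ih =>
    rw [Finset.sum_insert hj, Finset.sum_insert hj, add_left_comm, add_comm (v j)]
    linarith [h (x + ∑ k ∈ s, v k) j]

theorem sum_mul_le_Pcal {m : ℕ} {δhat : ℝ} {a : Fin m → ℝ}
    (ha : ∀ k, δhat / 2 ≤ a k ∧ a k ≤ 2 * δhat⁻¹) (z : Fin m → ℝ) :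
    ∑ k, a k * z k ≤ Pcal m δhat z := by
  have hbox : IsCompact (univ.pi fun _ : Fin m => Icc (δhat / 2) (2 * δhat⁻¹)) :=
    isCompact_univ_pi fun _ => isCompact_Icc
  have hbdd := (hbox.image (f := fun a : Fin m → ℝ => ∑ k, a k * z k) (by fun_prop)).bddAbove
  refine le_csSup (hbdd.mono ?_) ⟨a, ha, rfl⟩
  rintro _ ⟨b, hb, rfl⟩
  exact ⟨b, fun k _ => hb k, rfl⟩

theorem exists_max_inv_mul_add_abs_eq_mul {δ : ℝ} (hδ0 : 0 < δ) (hδ1 : δ ≤ 1) (y : ℝ) :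
    ∃ a, (δ / 2 ≤ a ∧ a ≤ 2 * δ⁻¹) ∧ max (δ⁻¹ * y) (δ * y) + δ / 2 * |y| = a * y := by
  have hδ : δ ≤ δ⁻¹ := le_trans hδ1 (one_le_inv₀ hδ0 |>.2 hδ1)
  rcases le_total 0 y with hy | hy
  · refine ⟨δ⁻¹ + δ / 2, ⟨by linarith, by linarith⟩, ?_⟩
    rw [max_eq_left (by nlinarith), abs_of_nonneg hy]
    ring
  · refine ⟨δ / 2, ⟨le_rfl, by linarith⟩, ?_⟩
    rw [max_eq_right (by nlinarith), abs_of_nonpos hy]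
    ring

theorem F_le_Pcal_general (m : ℕ) (δhat : ℝ) (hδhat : δhat ∈ Set.Ioc (0:ℝ) 1)
    (C₀ : ℝ) (F : (Fin m → ℝ) → ℝ)
    (hlip : ∃ C : ℝ≥0, LipschitzWith C F)
    (hgrad : ∀ (z : Fin m → ℝ) (f' : (Fin m → ℝ) →L[ℝ] ℝ), HasFDerivAt F f' z →
      ∀ k : Fin m, δhat ≤ f' (Pi.single k 1) ∧ f' (Pi.single k 1) ≤ δhat⁻¹)
    (hF0 : |F 0| ≤ C₀) :
    ∀ z : Fin m → ℝ, F z ≤ Pcal m δhat z - (δhat / 2) * (∑ k, |z k|) + C₀ := by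
  intro z
  obtain ⟨hδ0, hδ1⟩ := hδhat
  obtain ⟨K, hF⟩ := hlip
  have hincrement (k : Fin m) (x : Fin m → ℝ) (t : ℝ) :
      F (x + t • Pi.single k 1) - F x ≤ max (δhat⁻¹ * t) (δhat * t) :=
    sub_le_max_of_forall_nonneg_sub_mem_Icc
      (fun x _ ht => hF.sub_mem_Icc_of_hasFDerivAt (fun z f' hf => hgrad z f' hf k) x ht) x t
  have htelescope := sub_le_sum_of_forall_add_sub_le
    (v := fun k => z k • Pi.single k 1) (fun x k => hincrement k x (z k)) Finset.univ 0
  have hz : 0 + ∑ k, z k • (Pi.single k 1 : Fin m → ℝ) = z := by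
    simp [← Pi.single_smul', Finset.univ_sum_single]
  choose a ha hcoeff using fun k => exists_max_inv_mul_add_abs_eq_mul hδ0 hδ1 (z k)
  have hsum :
      ∑ k, max (δhat⁻¹ * z k) (δhat * z k) + δhat / 2 * ∑ k, |z k| = ∑ k, a k * z k := by
    rw [Finset.mul_sum, ← Finset.sum_add_distrib]
    exact Finset.sum_congr rfl fun k _ => hcoeff k
  rw [hz] at htelescope
  linarith [sum_mul_le_Pcal ha z, le_abs_self (F 0)]

/-- Lemma 4.2 of Krylov, "An ersatz existence theorem for fully nonlinear
parabolic equations without convexity assumptions", in self-contained form: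
a Lipschitz function `F` on `ℝ^m` with gradient in `[δ̂, δ̂⁻¹]^m` at points of
differentiability and `|F(0)| ≤ C₀` satisfies
`F(z) ≤ 𝒫(z) − (δ̂/2) Σ |z_k| + C₀`. -/
theorem F_le_Pcal (m : ℕ) (hm : 1 ≤ m) (δhat : ℝ) (hδhat : δhat ∈ Set.Ioc (0:ℝ) 1)
    (C₀ : ℝ) (hC₀ : 0 ≤ C₀) (F : (Fin m → ℝ) → ℝ)
    (hlip : ∃ C : ℝ≥0, LipschitzWith C F)
    (hgrad : ∀ (z : Fin m → ℝ) (f' : (Fin m → ℝ) →L[ℝ] ℝ), HasFDerivAt F f' z →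
      ∀ k : Fin m, δhat ≤ f' (Pi.single k 1) ∧ f' (Pi.single k 1) ≤ δhat⁻¹)
    (hF0 : |F 0| ≤ C₀) :
    ∀ z : Fin m → ℝ, F z ≤ Pcal m δhat z - (δhat / 2) * (∑ k, |z k|) + C₀ :=
  F_le_Pcal_general m δhat hδhat C₀ F hlip hgrad hF0
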